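/- Fix 0 < m ≤ L < ∞, α > 0, β ≥ 0, 0 < ρ ≤ τ < 1, and λ ≥ 0. Define the real matrices Â = [[β+1, −β, 0], [1, 0, 0], [−L(β+1), βL, 0]] (3×3), B̂ = (−α, 0, 1)ᵀ (3×1), Ĉ = [[L(β+1), −Lβ, ρ²], [−m(β+1), mβ, 0]] (2×3), D̂ = (−1, 1)ᵀ (2×1), and M = [[0, 1], [1, 0]]. Suppose there exists a symmetric positive definite 3×3 matrix P such that [[ÂᵀPÂ − τ²P, ÂᵀPB̂], [B̂ᵀPÂ, B̂ᵀPB̂]] + λ[Ĉ D̂]ᵀ M [Ĉ D̂] ⪯ 0 (negative semidefinite), where [Ĉ D̂] is the 2×4 matrix obtained by appending the column D̂ to Ĉ. Then for every p ≥ 1, every f ∈ S_p(m, L), every x₀, x₁ ∈ ℝᵖ, letting (x_t) be the Nesterov iterates with parameters α, β and x* the fixed point of the iteration, one has ‖x_t − x*‖ ≤ √(κ_P) · √(‖x₁ − x*‖² + ‖x₀ − x*‖²) · τᵗ for all t ≥ 0, where κ_P = σ_max(P)/σ_min(P) is the ratio of the largest to smallest eigenvalue of P. -/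

import Mathlib

open RealInnerProductSpace

/-- `f ∈ S_p(m, L)`: `f` is differentiable and its gradient satisfies the strong
convexity / Lipschitz sector condition
`m‖x−y‖² ≤ ⟨∇f(x) − ∇f(y), x − y⟩ ≤ L‖x−y‖²`. -/
def MemS {p : ℕ} (m L : ℝ) (f : EuclideanSpace ℝ (Fin p) → ℝ) : Prop :=
  Differentiable ℝ f ∧
  ∀ x y : EuclideanSpace ℝ (Fin p),
    m * ‖x - y‖^2 ≤ ⟪gradient f x - gradient f y, x - y⟫ ∧
    ⟪gradient f x - gradient f y, x - y⟫ ≤ L * ‖x - y‖^2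

/-- `x : ℕ → ℝᵖ` is a trajectory of Nesterov's accelerated method with parameters
`α, β` applied to `f`: for all `t ≥ 1`, `y_t = (1+β)x_t − βx_{t−1}` and
`x_{t+1} = y_t − α∇f(y_t)`. The values `x 0` and `x 1` are the initial points. -/
def NAMIter {p : ℕ} (f : EuclideanSpace ℝ (Fin p) → ℝ) (α β : ℝ)
    (x : ℕ → EuclideanSpace ℝ (Fin p)) : Prop :=
  ∀ t : ℕ, 1 ≤ t →
    x (t+1) = ((1+β) • x t - β • x (t-1))
      - α • gradient f ((1+β) • x t - β • x (t-1))

open Matrix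

/-!
Write `yₜ` for the extrapolated points, `pₜ = ∇f(yₜ) − m(yₜ − x*)` and
`qₜ = L(yₜ − x*) − ∇f(yₜ)` for the distances of the gradient to the two ends of the sector
`[m, L]`, and `ξₜ = (xₜ₊₁ − x*, xₜ − x*, −qₜ)`. Evaluated as a quadratic form of `· ⊗ I_p`
at `(ξₜ, ∇f(yₜ₊₁))`, the LMI is the dissipation inequality
`V(ξₜ₊₁) + 2λ⟪qₜ₊₁ − ρ²qₜ, pₜ₊₁⟫ ≤ τ² V(ξₜ)` for `V(ξ) = ξᵀ(P ⊗ I)ξ`.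
The function `h = f − m/2‖· − x*‖²` is convex with `(L − m)`-Lipschitz gradient `p`, so the
interpolation inequality `‖∇h z − ∇h y‖² ≤ 2(L − m)(h z − h y − ⟪∇h y, z − y⟫)` gives the
weighted off-by-one IQC `⟪qₜ₊₁ − ρ²qₜ, pₜ₊₁⟫ ≥ Wₜ₊₁ − ρ²Wₜ` with the nonnegative storage
`W = (L − m)(h(y) − h(x*)) − ‖p‖²/2`. Hence `V + 2λW` decays like `τ^{2t}`; starting from
`y₀ := x*` makes `q₀ = 0` and `W₀ = 0`, and bounding `V` by the extreme eigenvalues of `P`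
gives the claim.
-/

section GramForm

variable {ι κ E : Type*} [Fintype ι] [Fintype κ] [NormedAddCommGroup E] [InnerProductSpace ℝ E]

/-- The quadratic form of `S ⊗ I` on `ι → E`. -/
noncomputable def gramForm (S : Matrix ι ι ℝ) (w : ι → E) : ℝ :=
  ∑ i, ∑ j, S i j * ⟪w i, w j⟫

lemma gramForm_add (S T : Matrix ι ι ℝ) (w : ι → E) :
    gramForm (S + T) w = gramForm S w + gramForm T w := by
  simp only [gramForm, Matrix.add_apply, add_mul, Finset.sum_add_distrib]

lemma gramForm_smul (c : ℝ) (S : Matrix ι ι ℝ) (w : ι → E) :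
    gramForm (c • S) w = c * gramForm S w := by
  simp only [gramForm, Matrix.smul_apply, smul_eq_mul, Finset.mul_sum, mul_assoc]

lemma gramForm_neg (S : Matrix ι ι ℝ) (w : ι → E) : gramForm (-S) w = -gramForm S w := by
  simpa using gramForm_smul (-1) S w

lemma gramForm_sub (S T : Matrix ι ι ℝ) (w : ι → E) :
    gramForm (S - T) w = gramForm S w - gramForm T w := by
  rw [sub_eq_add_neg, gramForm_add, gramForm_neg, sub_eq_add_neg]

lemma gramForm_one [DecidableEq ι] (w : ι → E) :
    gramForm (1 : Matrix ι ι ℝ) w = ∑ i, ‖w i‖ ^ 2 := by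
  simp [gramForm, one_apply]

lemma gramForm_reindex (e : ι ≃ κ) (S : Matrix ι ι ℝ) (w : κ → E) :
    gramForm (reindex e e S) w = gramForm S (w ∘ e) := by
  simp only [gramForm, reindex_apply, submatrix_apply, Function.comp_apply]
  simp_rw [← e.sum_comp, Equiv.symm_apply_apply]

lemma gramForm_transpose_mul_mul (X : Matrix κ ι ℝ) (S : Matrix κ κ ℝ) (w : ι → E) :
    gramForm (Xᵀ * S * X) w = gramForm S (fun k => ∑ i, X k i • w i) := by
  simp only [gramForm, mul_apply, transpose_apply, sum_inner, inner_sum, real_inner_smul_left,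
    real_inner_smul_right, Finset.sum_mul, Finset.mul_sum]
  simp_rw [Finset.sum_comm (s := (Finset.univ : Finset ι)) (t := (Finset.univ : Finset κ))]
  rw [Finset.sum_comm]
  refine Finset.sum_congr rfl fun a _ => Finset.sum_congr rfl fun b _ => ?_
  rw [Finset.sum_comm]
  exact Finset.sum_congr rfl fun _ _ => Finset.sum_congr rfl fun _ _ => by ring

lemma Matrix.PosSemidef.gramForm_nonneg {S : Matrix ι ι ℝ} (hS : S.PosSemidef) (w : ι → E) :
    0 ≤ gramForm S w := by
  obtain ⟨n, v, rfl⟩ := posSemidef_iff_eq_sum_vecMulVec.mp hS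
  have hsum : gramForm (∑ k, vecMulVec (v k) (star (v k))) w =
      ∑ k, ‖∑ i, v k i • w i‖ ^ 2 := by
    simp only [gramForm, ← real_inner_self_eq_norm_sq, Matrix.sum_apply, vecMulVec_apply,
      star_trivial, sum_inner, inner_sum, real_inner_smul_left, real_inner_smul_right,
      Finset.sum_mul]
    simp_rw [Finset.sum_comm (s := (Finset.univ : Finset ι)) (t := (Finset.univ : Finset (Fin n)))]
    refine Finset.sum_congr rfl fun k _ => ?_
    rw [Finset.sum_comm]
    exact Finset.sum_congr rfl fun _ _ => Finset.sum_congr rfl fun _ _ => by ring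
  rw [hsum]
  positivity

section Spectral

open scoped MatrixOrder

variable [DecidableEq ι] {S : Matrix ι ι ℝ}

lemma Matrix.IsHermitian.posSemidef_sub_smul_one (hS : S.IsHermitian) {c : ℝ}
    (hc : ∀ i, c ≤ hS.eigenvalues i) : (S - c • 1).PosSemidef := by
  have : algebraMap ℝ (Matrix ι ι ℝ) c ≤ S := by
    refine algebraMap_le_of_le_spectrum ?_ hS
    rw [hS.spectrum_real_eq_range_eigenvalues]
    rintro _ ⟨i, rfl⟩
    exact hc i
  rwa [Algebra.algebraMap_eq_smul_one, le_iff] at this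

lemma Matrix.IsHermitian.posSemidef_smul_one_sub (hS : S.IsHermitian) {c : ℝ}
    (hc : ∀ i, hS.eigenvalues i ≤ c) : (c • 1 - S).PosSemidef := by
  have : S ≤ algebraMap ℝ (Matrix ι ι ℝ) c := by
    refine le_algebraMap_of_spectrum_le ?_ hS
    rw [hS.spectrum_real_eq_range_eigenvalues]
    rintro _ ⟨i, rfl⟩
    exact hc i
  rwa [Algebra.algebraMap_eq_smul_one, le_iff] at this

lemma Matrix.IsHermitian.iInf_eigenvalues_mul_le_gramForm (hS : S.IsHermitian) (w : ι → E) :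
    (⨅ i, hS.eigenvalues i) * ∑ i, ‖w i‖ ^ 2 ≤ gramForm S w := by
  have := (hS.posSemidef_sub_smul_one fun i =>
    ciInf_le (Set.finite_range _).bddBelow i).gramForm_nonneg w
  rw [gramForm_sub, gramForm_smul, gramForm_one] at this
  linarith

lemma Matrix.IsHermitian.gramForm_le_iSup_eigenvalues_mul (hS : S.IsHermitian) (w : ι → E) :
    gramForm S w ≤ (⨆ i, hS.eigenvalues i) * ∑ i, ‖w i‖ ^ 2 := by
  have := (hS.posSemidef_smul_one_sub fun i =>
    le_ciSup (Set.finite_range _).bddAbove i).gramForm_nonneg w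
  rw [gramForm_sub, gramForm_smul, gramForm_one] at this
  linarith

lemma Matrix.PosDef.iInf_eigenvalues_pos [Nonempty ι] (hS : S.PosDef) :
    0 < ⨅ i, hS.1.eigenvalues i := by
  obtain ⟨i, hi⟩ := exists_eq_ciInf_of_finite (f := hS.1.eigenvalues)
  exact hi ▸ hS.eigenvalues_pos i

end Spectral

end GramForm

lemma fromBlocks_eq_transpose_fromCols_mul {ι κ R : Type*} [Fintype ι] [DecidableEq ι]
    [CommRing R] (A P : Matrix ι ι R) (B : Matrix ι κ R) (c : R) :
    fromBlocks (Aᵀ * P * A - c • P) (Aᵀ * P * B) (Bᵀ * P * A) (Bᵀ * P * B) =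
      (fromCols A B)ᵀ * P * fromCols A B -
        c • ((fromCols (1 : Matrix ι ι R) (0 : Matrix ι κ R))ᵀ * P *
          fromCols (1 : Matrix ι ι R) (0 : Matrix ι κ R)) := by
  rw [transpose_fromCols, transpose_fromCols, fromRows_mul, fromRows_mul_fromCols, fromRows_mul,
    fromRows_mul_fromCols]
  simp [fromBlocks_smul, sub_eq_add_neg, fromBlocks_neg, fromBlocks_add]

lemma gramForm_le_of_posSemidef_lmi {n k r : ℕ} {E : Type*} [NormedAddCommGroup E]
    [InnerProductSpace ℝ E] (A P : Matrix (Fin n) (Fin n) ℝ) (B : Matrix (Fin n) (Fin k) ℝ)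
    (C : Matrix (Fin r) (Fin (n + k)) ℝ) (M : Matrix (Fin r) (Fin r) ℝ) (c lam : ℝ)
    (hLMI : (-((reindex finSumFinEquiv finSumFinEquiv
        (fromBlocks (Aᵀ * P * A - c • P) (Aᵀ * P * B) (Bᵀ * P * A) (Bᵀ * P * B)))
        + lam • (Cᵀ * M * C))).PosSemidef) (w : Fin (n + k) → E) :
    gramForm P (fun i => ∑ j, A i j • w (Fin.castAdd k j) + ∑ j, B i j • w (Fin.natAdd n j)) +
        lam * gramForm M (fun l => ∑ j, C l j • w j) ≤
      c * gramForm P (fun i => w (Fin.castAdd k i)) := by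
  have h := hLMI.gramForm_nonneg w
  rw [gramForm_neg, gramForm_add, gramForm_smul, gramForm_reindex,
    fromBlocks_eq_transpose_fromCols_mul, gramForm_sub, gramForm_smul, gramForm_transpose_mul_mul,
    gramForm_transpose_mul_mul, gramForm_transpose_mul_mul] at h
  simp only [Fintype.sum_sum_type, fromCols_apply_inl, fromCols_apply_inr, Function.comp_apply,
    finSumFinEquiv_apply_left, finSumFinEquiv_apply_right, one_apply, ite_smul, one_smul,
    zero_smul, Finset.sum_ite_eq, Finset.mem_univ, if_true, Matrix.zero_apply,
    Finset.sum_const_zero, add_zero] at h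
  linarith

lemma le_add_deriv_add_of_deriv_sub_le {g g' : ℝ → ℝ} {c : ℝ} (hg : ∀ t, HasDerivAt g (g' t) t)
    (h : ∀ t ∈ Set.Ioo (0 : ℝ) 1, g' t - g' 0 ≤ c * t) : g 1 ≤ g 0 + g' 0 + c / 2 := by
  set k : ℝ → ℝ := fun s => g s - s * g' 0 - c / 2 * s ^ 2
  have hk : ∀ t, HasDerivAt k (g' t - g' 0 - c * t) t := fun t => by
    refine (((hg t).fun_sub ((hasDerivAt_id' t).mul_const (g' 0))).fun_sub
      ((hasDerivAt_pow 2 t).const_mul (c / 2))).congr_deriv ?_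
    norm_num
    ring
  have hanti : AntitoneOn k (Set.Icc 0 1) := by
    refine antitoneOn_of_hasDerivWithinAt_nonpos (convex_Icc 0 1)
      (continuous_iff_continuousAt.2 fun t => (hk t).continuousAt).continuousOn
      (fun t _ => (hk t).hasDerivWithinAt) fun t ht => ?_
    rw [interior_Icc] at ht
    linarith [h t ht]
  have := hanti (Set.left_mem_Icc.2 zero_le_one) (Set.right_mem_Icc.2 zero_le_one) zero_le_one
  simp only [k] at this
  linarith

section GradientInequalities

variable {F : Type*} [NormedAddCommGroup F] [InnerProductSpace ℝ F] [CompleteSpace F]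
  {φ : F → ℝ} {G : F → F}

lemma hasDerivAt_comp_add_smul (hφ : ∀ x, HasGradientAt φ (G x) x) (y d : F) (t : ℝ) :
    HasDerivAt (fun s : ℝ => φ (y + s • d)) ⟪G (y + t • d), d⟫ t := by
  have hline : HasDerivAt (fun s : ℝ => y + s • d) d t := by
    simpa using ((hasDerivAt_id t).smul_const d).const_add y
  simpa [Function.comp_def] using (hφ (y + t • d)).hasFDerivAt.comp_hasDerivAt t hline

lemma add_inner_le_of_monotone_gradient (hφ : ∀ x, HasGradientAt φ (G x) x)
    (hG : ∀ a b, 0 ≤ ⟪G a - G b, a - b⟫) (y z : F) : φ y + ⟪G y, z - y⟫ ≤ φ z := by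
  have := le_add_deriv_add_of_deriv_sub_le (g := fun s => -φ (y + s • (z - y))) (c := 0)
    (fun t => (hasDerivAt_comp_add_smul hφ y (z - y) t).neg) fun t ht => by
      have h := hG (y + t • (z - y)) y
      rw [add_sub_cancel_left, inner_smul_right, inner_sub_left] at h
      simp only [zero_smul, add_zero, zero_mul]
      nlinarith [ht.1]
  simp only [zero_smul, add_zero, one_smul, add_sub_cancel] at this
  linarith

lemma le_add_inner_add_of_gradient_le {K : ℝ} (hφ : ∀ x, HasGradientAt φ (G x) x)
    (hG : ∀ a b, ⟪G a - G b, a - b⟫ ≤ K * ‖a - b‖ ^ 2) (y z : F) :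
    φ z ≤ φ y + ⟪G y, z - y⟫ + K / 2 * ‖z - y‖ ^ 2 := by
  have := le_add_deriv_add_of_deriv_sub_le (g := fun s => φ (y + s • (z - y)))
    (c := K * ‖z - y‖ ^ 2) (hasDerivAt_comp_add_smul hφ y (z - y)) fun t ht => by
      have h := hG (y + t • (z - y)) y
      rw [add_sub_cancel_left, inner_smul_right, inner_sub_left, norm_smul, mul_pow,
        Real.norm_eq_abs, sq_abs] at h
      simp only [zero_smul, add_zero]
      nlinarith [ht.1]
  simp only [zero_smul, add_zero, one_smul, add_sub_cancel] at this
  linarith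

lemma sq_norm_sub_le_of_gradient {K : ℝ} (hK : 0 ≤ K) (hφ : ∀ x, HasGradientAt φ (G x) x)
    (hGmono : ∀ a b, 0 ≤ ⟪G a - G b, a - b⟫)
    (hGle : ∀ a b, ⟪G a - G b, a - b⟫ ≤ K * ‖a - b‖ ^ 2) (y z : F) :
    ‖G z - G y‖ ^ 2 ≤ 2 * K * (φ z - φ y - ⟪G y, z - y⟫) := by
  set Δ := G z - G y
  set R := φ z - φ y - ⟪G y, z - y⟫
  -- Compare the lower bound at `y` with the descent bound at `z`, at the point `z - t • Δ`;
  -- the discriminant in `t` then gives the claim.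
  have key : ∀ t : ℝ, 0 ≤ K / 2 * ‖Δ‖ ^ 2 * (t * t) + -‖Δ‖ ^ 2 * t + R := fun t => by
    have h₁ := add_inner_le_of_monotone_gradient hφ hGmono y (z - t • Δ)
    have h₂ := le_add_inner_add_of_gradient_le hφ hGle z (z - t • Δ)
    have hΔ : ⟪Δ, Δ⟫ = ⟪G z, Δ⟫ - ⟪G y, Δ⟫ := inner_sub_left _ _ _
    rw [sub_sub_cancel_left, inner_neg_right, norm_neg, norm_smul, mul_pow, Real.norm_eq_abs,
      sq_abs, inner_smul_right] at h₂
    rw [sub_right_comm, inner_sub_right, inner_smul_right] at h₁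
    rw [real_inner_self_eq_norm_sq] at hΔ
    have ht : t * ‖Δ‖ ^ 2 = t * ⟪G z, Δ⟫ - t * ⟪G y, Δ⟫ := by rw [hΔ]; ring
    have hR : R = φ z - φ y - ⟪G y, z - y⟫ := rfl
    linarith
  have hdisc := discrim_le_zero key
  rw [discrim] at hdisc
  have hR : 0 ≤ R := by simpa using key 0
  rcases (sq_nonneg ‖Δ‖).eq_or_lt with h | h
  · rw [← h]
    positivity
  · nlinarith

end GradientInequalities

section SectorIQC

variable {F : Type*} [NormedAddCommGroup F] [InnerProductSpace ℝ F]
  {m L : ℝ} {f : F → ℝ} {G : F → F} {xs : F}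

def lowerSlack (m : ℝ) (G : F → F) (xs y : F) : F := G y - m • (y - xs)

def upperSlack (L : ℝ) (G : F → F) (xs y : F) : F := L • (y - xs) - G y

/-- `(L - m) (h y - h xs) - ‖∇h y‖² / 2` for `h = f - m/2 ‖· - xs‖²`, whose gradient is
`lowerSlack m G xs`. -/
noncomputable def iqcStorage (m L : ℝ) (f : F → ℝ) (G : F → F) (xs y : F) : ℝ :=
  (L - m) * (f y - f xs - m / 2 * ‖y - xs‖ ^ 2) - ‖lowerSlack m G xs y‖ ^ 2 / 2

lemma upperSlack_eq_sub_lowerSlack (m : ℝ) (y : F) :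
    upperSlack L G xs y = (L - m) • (y - xs) - lowerSlack m G xs y := by
  simp only [upperSlack, lowerSlack]
  module

variable [CompleteSpace F]

lemma HasGradientAt.sub_mul_norm_sub_sq {g y : F} (hf : HasGradientAt f g y) (m : ℝ) (xs : F) :
    HasGradientAt (fun z => f z - m / 2 * ‖z - xs‖ ^ 2) (g - m • (y - xs)) y := by
  rw [hasGradientAt_iff_hasFDerivAt] at hf ⊢
  refine (hf.fun_sub
    (((hasFDerivAt_id y).sub_const xs).norm_sq.const_mul (m / 2))).congr_fderiv ?_
  ext v
  simp
  ring

lemma inner_lowerSlack_upperSlack_le (hmL : m ≤ L) (hf : ∀ x, HasGradientAt f (G x) x)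
    (hG : ∀ a b, m * ‖a - b‖ ^ 2 ≤ ⟪G a - G b, a - b⟫ ∧ ⟪G a - G b, a - b⟫ ≤ L * ‖a - b‖ ^ 2)
    (a b : F) :
    ⟪lowerSlack m G xs a, upperSlack L G xs b⟫ ≤
      ⟪lowerSlack m G xs a, upperSlack L G xs a⟫ + iqcStorage m L f G xs b -
        iqcStorage m L f G xs a := by
  unfold iqcStorage
  set v := lowerSlack m G xs
  have hv : ∀ a b, ⟪v a - v b, a - b⟫ = ⟪G a - G b, a - b⟫ - m * ‖a - b‖ ^ 2 := fun a b => by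
    have : v a - v b = (G a - G b) - m • (a - b) := by
      simp only [v, lowerSlack]
      module
    rw [this, inner_sub_left, real_inner_smul_left, real_inner_self_eq_norm_sq]
  have hinterp := sq_norm_sub_le_of_gradient (G := v) (sub_nonneg.2 hmL)
    (fun y => (hf y).sub_mul_norm_sub_sq m xs) (fun a b => by linarith [hv a b, hG a b])
    (fun a b => by linarith [hv a b, hG a b]) a b
  rw [upperSlack_eq_sub_lowerSlack m, upperSlack_eq_sub_lowerSlack m, inner_sub_right,
    inner_sub_right, real_inner_smul_right, real_inner_smul_right, real_inner_self_eq_norm_sq]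
  rw [norm_sub_sq_real, show b - a = (b - xs) - (a - xs) by abel, inner_sub_right,
    real_inner_comm (v a) (v b)] at hinterp
  linarith

lemma iqcStorage_nonneg (hmL : m ≤ L) (hf : ∀ x, HasGradientAt f (G x) x)
    (hG : ∀ a b, m * ‖a - b‖ ^ 2 ≤ ⟪G a - G b, a - b⟫ ∧ ⟪G a - G b, a - b⟫ ≤ L * ‖a - b‖ ^ 2)
    (hxs : G xs = 0) (y : F) : 0 ≤ iqcStorage m L f G xs y := by
  simpa [lowerSlack, upperSlack, iqcStorage, hxs] using
    inner_lowerSlack_upperSlack_le (xs := xs) hmL hf hG xs y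

lemma iqcStorage_sub_le_inner (hmL : m ≤ L) (hf : ∀ x, HasGradientAt f (G x) x)
    (hG : ∀ a b, m * ‖a - b‖ ^ 2 ≤ ⟪G a - G b, a - b⟫ ∧ ⟪G a - G b, a - b⟫ ≤ L * ‖a - b‖ ^ 2)
    (hxs : G xs = 0) {ρ : ℝ} (hρ : ρ ^ 2 ≤ 1) (a b : F) :
    iqcStorage m L f G xs b - ρ ^ 2 * iqcStorage m L f G xs a ≤
      ⟪upperSlack L G xs b - ρ ^ 2 • upperSlack L G xs a, lowerSlack m G xs b⟫ := by
  have hba := inner_lowerSlack_upperSlack_le (xs := xs) hmL hf hG b a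
  have hbxs := inner_lowerSlack_upperSlack_le (xs := xs) hmL hf hG b xs
  have hq : upperSlack L G xs xs = 0 := by simp [upperSlack, hxs]
  have hW : iqcStorage m L f G xs xs = 0 := by simp [iqcStorage, lowerSlack, hxs]
  rw [hq, inner_zero_right, hW] at hbxs
  rw [inner_sub_left, real_inner_smul_left, real_inner_comm (lowerSlack m G xs b),
    real_inner_comm (lowerSlack m G xs b)]
  nlinarith [mul_le_mul_of_nonneg_left hba (sq_nonneg ρ),
    mul_le_mul_of_nonneg_left hbxs (sub_nonneg.2 hρ)]

end SectorIQC

lemma le_pow_mul_of_dissipation {V W : ℕ → ℝ} {lam ρ τ : ℝ} (hlam : 0 ≤ lam)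
    (hρτ : ρ ^ 2 ≤ τ ^ 2) (hW : ∀ s, 0 ≤ W s) (hW0 : W 0 = 0)
    (hV : ∀ s, V (s + 1) + lam * (W (s + 1) - ρ ^ 2 * W s) ≤ τ ^ 2 * V s) (s : ℕ) :
    V s ≤ (τ ^ 2) ^ s * V 0 := by
  have key : ∀ s, V s + lam * W s ≤ (τ ^ 2) ^ s * V 0 := by
    intro s
    induction s with
    | zero => simp [hW0]
    | succ s ih =>
      have hρW : lam * (ρ ^ 2 * W s) ≤ lam * (τ ^ 2 * W s) :=
        mul_le_mul_of_nonneg_left (mul_le_mul_of_nonneg_right hρτ (hW s)) hlam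
      have := mul_le_mul_of_nonneg_left ih (sq_nonneg τ)
      rw [pow_succ']
      nlinarith [hV s]
  linarith [key s, mul_nonneg hlam (hW s)]

section Nesterov

variable {E : Type*} [NormedAddCommGroup E] [InnerProductSpace ℝ E]

lemma gramForm_le_of_nesterov_lmi {m L α β ρ τ lam : ℝ}
    {Ahat P : Matrix (Fin 3) (Fin 3) ℝ} {Bhat : Matrix (Fin 3) (Fin 1) ℝ}
    {CDhat : Matrix (Fin 2) (Fin 4) ℝ} {Mmat : Matrix (Fin 2) (Fin 2) ℝ}
    (hA : Ahat = !![β+1, -β, 0; 1, 0, 0; -L*(β+1), β*L, 0])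
    (hB : Bhat = !![-α; 0; 1])
    (hCD : CDhat = !![L*(β+1), -L*β, ρ^2, -1; -m*(β+1), m*β, 0, 1])
    (hM : Mmat = !![0, 1; 1, 0])
    (hLMI : (-((Matrix.reindex finSumFinEquiv finSumFinEquiv
        (Matrix.fromBlocks (Ahatᵀ * P * Ahat - τ^2 • P) (Ahatᵀ * P * Bhat)
          (Bhatᵀ * P * Ahat) (Bhatᵀ * P * Bhat)))
        + lam • (CDhatᵀ * Mmat * CDhat))).PosSemidef) (a b c u : E) :
    gramForm P ![(β + 1) • a - β • b - α • u, a, -(L * (β + 1)) • a + (β * L) • b + u] +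
        lam * (2 * ⟪(L * (β + 1)) • a - (L * β) • b + ρ ^ 2 • c - u,
          -(m * (β + 1)) • a + (m * β) • b + u⟫) ≤
      τ ^ 2 * gramForm P ![a, b, c] := by
  have h := gramForm_le_of_posSemidef_lmi Ahat P Bhat CDhat Mmat (τ ^ 2) lam hLMI ![a, b, c, u]
  subst hA hB hCD hM
  have hstate : (fun i => ![a, b, c, u] (Fin.castAdd 1 i)) = ![a, b, c] := by
    funext i
    fin_cases i <;> rfl
  have hnext : (fun i => ∑ j, !![β+1, -β, 0; 1, 0, 0; -L*(β+1), β*L, 0] i j •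
        ![a, b, c, u] (Fin.castAdd 1 j) + ∑ j, !![-α; 0; 1] i j • ![a, b, c, u] (Fin.natAdd 3 j)) =
      ![(β + 1) • a - β • b - α • u, a, -(L * (β + 1)) • a + (β * L) • b + u] := by
    funext i
    fin_cases i
    · simp [Fin.sum_univ_three]
      module
    · simp [Fin.sum_univ_three]
    · simp [Fin.sum_univ_three]
  have hsupply : gramForm !![0, 1; 1, 0]
      (fun l => ∑ j, !![L*(β+1), -L*β, ρ^2, -1; -m*(β+1), m*β, 0, 1] l j • ![a, b, c, u] j) =
      2 * ⟪(L * (β + 1)) • a - (L * β) • b + ρ ^ 2 • c - u,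
          -(m * (β + 1)) • a + (m * β) • b + u⟫ := by
    simp [gramForm, Fin.sum_univ_two, Fin.sum_univ_four, sub_eq_add_neg]
    rw [real_inner_comm ((L * (β + 1)) • a + _ + _ + _)]
    ring
  rwa [hstate, hnext, hsupply] at h

def nesterovY (β : ℝ) (x : ℕ → E) (xs : E) : ℕ → E
  | 0 => xs
  | s + 1 => (1 + β) • x (s + 1) - β • x s

def nesterovState (L β : ℝ) (G : E → E) (x : ℕ → E) (xs : E) (s : ℕ) : Fin 3 → E :=
  ![x (s + 1) - xs, x s - xs, -upperSlack L G xs (nesterovY β x xs s)]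

lemma sq_norm_sub_le_sum_nesterovState (L β : ℝ) (G : E → E) (x : ℕ → E) (xs : E) (s : ℕ) :
    ‖x s - xs‖ ^ 2 ≤ ∑ i, ‖nesterovState L β G x xs s i‖ ^ 2 := by
  simp only [Fin.sum_univ_three, nesterovState, Matrix.cons_val, norm_neg]
  nlinarith [sq_nonneg ‖x (s + 1) - xs‖, sq_nonneg ‖upperSlack L G xs (nesterovY β x xs s)‖]

lemma sum_nesterovState_zero {L β : ℝ} {G : E → E} {xs : E} (hxs : G xs = 0) (x : ℕ → E) :
    ∑ i, ‖nesterovState L β G x xs 0 i‖ ^ 2 = ‖x 1 - xs‖ ^ 2 + ‖x 0 - xs‖ ^ 2 := by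
  simp [Fin.sum_univ_three, nesterovState, nesterovY, upperSlack, hxs]

end Nesterov

lemma NAMIter.gramForm_nesterovState_succ_le {p : ℕ} {f : EuclideanSpace ℝ (Fin p) → ℝ}
    {m L α β ρ τ lam : ℝ} {P : Matrix (Fin 3) (Fin 3) ℝ} {x : ℕ → EuclideanSpace ℝ (Fin p)}
    (hx : NAMIter f α β x) (hLMI : ∀ a b c u : EuclideanSpace ℝ (Fin p),
      gramForm P ![(β + 1) • a - β • b - α • u, a, -(L * (β + 1)) • a + (β * L) • b + u] +
        lam * (2 * ⟪(L * (β + 1)) • a - (L * β) • b + ρ ^ 2 • c - u,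
          -(m * (β + 1)) • a + (m * β) • b + u⟫) ≤
      τ ^ 2 * gramForm P ![a, b, c]) (xs : EuclideanSpace ℝ (Fin p)) (s : ℕ) :
    gramForm P (nesterovState L β (gradient f) x xs (s + 1)) +
        lam * (2 * ⟪upperSlack L (gradient f) xs (nesterovY β x xs (s + 1)) -
            ρ ^ 2 • upperSlack L (gradient f) xs (nesterovY β x xs s),
          lowerSlack m (gradient f) xs (nesterovY β x xs (s + 1))⟫) ≤
      τ ^ 2 * gramForm P (nesterovState L β (gradient f) x xs s) := by
  have hstep := hx (s + 1) (by omega)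
  rw [Nat.add_sub_cancel] at hstep
  convert hLMI (x (s + 1) - xs) (x s - xs) (-upperSlack L (gradient f) xs (nesterovY β x xs s))
    (gradient f (nesterovY β x xs (s + 1))) using 4
  · funext i
    fin_cases i <;> simp [nesterovState, nesterovY, upperSlack, hstep] <;> module
  · congr 1 <;> simp [upperSlack, lowerSlack, nesterovY] <;> module
  · simp [nesterovState]

lemma le_sqrt_div_mul_sqrt_mul_pow {r lo hi S τ : ℝ} {t : ℕ} (hlo : 0 < lo) (hτ : 0 ≤ τ)
    (hr : 0 ≤ r) (hS : 0 ≤ S) (h : lo * r ^ 2 ≤ (τ ^ 2) ^ t * (hi * S)) :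
    r ≤ √(hi / lo) * √S * τ ^ t := by
  have hr2 : r ^ 2 ≤ hi / lo * S * (τ ^ t) ^ 2 := by
    rw [div_mul_eq_mul_div, div_mul_eq_mul_div, le_div_iff₀ hlo, ← pow_mul, mul_comm t, pow_mul]
    linarith
  calc r = √(r ^ 2) := (Real.sqrt_sq hr).symm
    _ ≤ √(hi / lo * S * (τ ^ t) ^ 2) := Real.sqrt_le_sqrt hr2
    _ = √(hi / lo) * √S * τ ^ t := by
      rw [Real.sqrt_mul' _ (sq_nonneg _), Real.sqrt_mul' _ hS, Real.sqrt_sq (pow_nonneg hτ t)]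

theorem stmt13_general (m L α β ρ τ lam : ℝ)
    (hmL : m ≤ L) (hα : 0 < α)
    (hρ : 0 < ρ) (hρτ : ρ ≤ τ) (hτ : τ < 1) (hlam : 0 ≤ lam)
    (Ahat : Matrix (Fin 3) (Fin 3) ℝ) (Bhat : Matrix (Fin 3) (Fin 1) ℝ)
    (CDhat : Matrix (Fin 2) (Fin 4) ℝ) (Mmat : Matrix (Fin 2) (Fin 2) ℝ)
    (hA : Ahat = !![β+1, -β, 0; 1, 0, 0; -L*(β+1), β*L, 0])
    (hB : Bhat = !![-α; 0; 1])
    (hCD : CDhat = !![L*(β+1), -L*β, ρ^2, -1; -m*(β+1), m*β, 0, 1])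
    (hM : Mmat = !![0, 1; 1, 0])
    (P : Matrix (Fin 3) (Fin 3) ℝ) (hP : P.PosDef)
    (hLMI : (-((Matrix.reindex finSumFinEquiv finSumFinEquiv
        (Matrix.fromBlocks (Ahatᵀ * P * Ahat - τ^2 • P) (Ahatᵀ * P * Bhat)
          (Bhatᵀ * P * Ahat) (Bhatᵀ * P * Bhat)))
        + lam • (CDhatᵀ * Mmat * CDhat))).PosSemidef) :
    ∀ (p : ℕ), 1 ≤ p →
    ∀ f : EuclideanSpace ℝ (Fin p) → ℝ, MemS m L f →
    ∀ x : ℕ → EuclideanSpace ℝ (Fin p), NAMIter f α β x →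
    ∀ xstar : EuclideanSpace ℝ (Fin p), xstar - α • gradient f xstar = xstar →
    ∀ t : ℕ,
      ‖x t - xstar‖ ≤
        Real.sqrt ((⨆ i, hP.1.eigenvalues i) / (⨅ i, hP.1.eigenvalues i)) *
          Real.sqrt (‖x 1 - xstar‖^2 + ‖x 0 - xstar‖^2) * τ^t := by
  intro p _ f hf x hx xstar hstar t
  have hgrad : ∀ y, HasGradientAt f (gradient f y) y := fun y => (hf.1 y).hasGradientAt
  have hxs : gradient f xstar = 0 := by simpa [hα.ne'] using hstar
  have hρ1 : ρ ^ 2 ≤ 1 := by nlinarith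
  have hρτ2 : ρ ^ 2 ≤ τ ^ 2 := by nlinarith
  let y := nesterovY β x xstar
  let V s := gramForm P (nesterovState L β (gradient f) x xstar s)
  have hdecay : V t ≤ (τ ^ 2) ^ t * V 0 :=
    le_pow_mul_of_dissipation (lam := 2 * lam)
      (W := fun s => iqcStorage m L f (gradient f) xstar (y s)) (by positivity) hρτ2
      (fun s => iqcStorage_nonneg hmL hgrad hf.2 hxs _)
      (by simp [y, nesterovY, iqcStorage, lowerSlack, hxs]) (fun s => by
        have hdiss := hx.gramForm_nesterovState_succ_le
          (gramForm_le_of_nesterov_lmi hA hB hCD hM hLMI) xstar s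
        have hiqc := iqcStorage_sub_le_inner hmL hgrad hf.2 hxs hρ1 (y s) (y (s + 1))
        nlinarith) t
  have hlow := hP.1.iInf_eigenvalues_mul_le_gramForm (nesterovState L β (gradient f) x xstar t)
  have hup := hP.1.gramForm_le_iSup_eigenvalues_mul (nesterovState L β (gradient f) x xstar 0)
  rw [sum_nesterovState_zero hxs] at hup
  have hlo := hP.iInf_eigenvalues_pos
  refine le_sqrt_div_mul_sqrt_mul_pow hlo (hρ.le.trans hρτ) (norm_nonneg _) (by positivity) ?_
  nlinarith [mul_le_mul_of_nonneg_left hup (pow_nonneg (sq_nonneg τ) t),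
    mul_le_mul_of_nonneg_left (sq_norm_sub_le_sum_nesterovState L β (gradient f) x xstar t) hlo.le]

/-- Theorem 1 (Lessard et al.) specialized to Nesterov's method: if the IQC linear
matrix inequality has a positive definite solution `P`, then Nesterov's method
converges linearly with rate `τ` and constant `√(κ_P)`, where
`κ_P = σ_max(P)/σ_min(P)`. -/
theorem stmt13 (m L α β ρ τ lam : ℝ)
    (hm : 0 < m) (hmL : m ≤ L) (hα : 0 < α) (hβ : 0 ≤ β)
    (hρ : 0 < ρ) (hρτ : ρ ≤ τ) (hτ : τ < 1) (hlam : 0 ≤ lam)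
    (Ahat : Matrix (Fin 3) (Fin 3) ℝ) (Bhat : Matrix (Fin 3) (Fin 1) ℝ)
    (CDhat : Matrix (Fin 2) (Fin 4) ℝ) (Mmat : Matrix (Fin 2) (Fin 2) ℝ)
    (hA : Ahat = !![β+1, -β, 0; 1, 0, 0; -L*(β+1), β*L, 0])
    (hB : Bhat = !![-α; 0; 1])
    (hCD : CDhat = !![L*(β+1), -L*β, ρ^2, -1; -m*(β+1), m*β, 0, 1])
    (hM : Mmat = !![0, 1; 1, 0])
    (P : Matrix (Fin 3) (Fin 3) ℝ) (hP : P.PosDef)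
    (hLMI : (-((Matrix.reindex finSumFinEquiv finSumFinEquiv
        (Matrix.fromBlocks (Ahatᵀ * P * Ahat - τ^2 • P) (Ahatᵀ * P * Bhat)
          (Bhatᵀ * P * Ahat) (Bhatᵀ * P * Bhat)))
        + lam • (CDhatᵀ * Mmat * CDhat))).PosSemidef) :
    ∀ (p : ℕ), 1 ≤ p →
    ∀ f : EuclideanSpace ℝ (Fin p) → ℝ, MemS m L f →
    ∀ x : ℕ → EuclideanSpace ℝ (Fin p), NAMIter f α β x →
    ∀ xstar : EuclideanSpace ℝ (Fin p), xstar - α • gradient f xstar = xstar →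
    ∀ t : ℕ,
      ‖x t - xstar‖ ≤
        Real.sqrt ((⨆ i, hP.1.eigenvalues i) / (⨅ i, hP.1.eigenvalues i)) *
          Real.sqrt (‖x 1 - xstar‖^2 + ‖x 0 - xstar‖^2) * τ^t :=
  stmt13_general m L α β ρ τ lam hmL hα hρ hρτ hτ hlam Ahat Bhat CDhat Mmat hA hB hCD hM P hP hLMI
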